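/- Let m ≥ 38 be an even integer, let G be a graph attaining the maximum spectral radius among all H(4,3)-free graphs with m edges and no isolated vertices, let x be a positive eigenvector of the adjacency matrix of G corresponding to ρ(G), and let u* be a vertex at which x attains its maximum entry. Set N = N(u*), W = V(G) ∖ N[u*], A₊ = {v ∈ N : v has at least one neighbor in N}. Then e(W) ≤ e(A₊) − |A₊| + 1, where e(W) is the number of edges of G with both endpoints in W and e(A₊) is the number of edges of G with both endpoints in A₊. -/

import Mathlib

open SimpleGraph Matrix

/-- `H` occurs as a subgraph of `G`: an injective map sending adjacent vertices to
adjacent vertices. -/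
def ContainsSub {α β : Type*} (H : SimpleGraph α) (G : SimpleGraph β) : Prop :=
  ∃ f : α → β, Function.Injective f ∧ ∀ ⦃a b⦄, H.Adj a b → G.Adj (f a) (f b)

/-- The graph `H(4,3)`: a 4-cycle `0-1-2-3-0` and a triangle `0-4-5-0`
sharing the common vertex `0`. -/
def H43 : SimpleGraph (Fin 6) :=
  SimpleGraph.fromEdgeSet {s(0,1), s(1,2), s(2,3), s(3,0), s(0,4), s(4,5), s(5,0)}

/-- `G` is `H(4,3)`-free. -/
def H43Free {β : Type*} (G : SimpleGraph β) : Prop := ¬ ContainsSub H43 G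

open Classical in
/-- The real adjacency matrix of a simple graph. -/
noncomputable def adjMat {V : Type*} (G : SimpleGraph V) : Matrix V V ℝ :=
  fun i j => if G.Adj i j then 1 else 0

/-- The spectral radius of a finite simple graph: the largest eigenvalue of its
adjacency matrix. -/
noncomputable def specRad {V : Type*} [Fintype V] (G : SimpleGraph V) : ℝ :=
  sSup {t : ℝ | ∃ x : V → ℝ, x ≠ 0 ∧ (adjMat G).mulVec x = t • x}

/-- `S_{n,2} = K₂ ∨ (n-2)K₁`: vertices `0` and `1` are adjacent to everything. -/
def Sgraph (n : ℕ) : SimpleGraph (Fin n) where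
  Adj i j := i ≠ j ∧ (i.val < 2 ∨ j.val < 2)
  symm := by constructor; rintro i j ⟨h1, h2⟩; exact ⟨h1.symm, h2.symm⟩
  loopless := by constructor; rintro i ⟨h1, _⟩; exact h1 rfl

/-- `S⁻_{n,2}`: the graph `S_{n,2}` with the edge `{1,2}` (an edge incident to a
vertex of degree two) deleted. -/
def SgraphMinus (n : ℕ) : SimpleGraph (Fin n) where
  Adj i j := i ≠ j ∧ (i.val < 2 ∨ j.val < 2) ∧
    ¬(i.val = 1 ∧ j.val = 2) ∧ ¬(i.val = 2 ∧ j.val = 1)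
  symm := by
    constructor
    rintro i j ⟨h1, h2, h3, h4⟩
    exact ⟨h1.symm, h2.symm, fun hc => h4 ⟨hc.2, hc.1⟩, fun hc => h3 ⟨hc.2, hc.1⟩⟩
  loopless := by constructor; rintro i ⟨h1, _⟩; exact h1 rfl

/-- The graph obtained from `S_{k,2}` (on vertices `0,…,k-1`, with `0,1` dominating)
by joining the maximum degree vertex `0` to `l` new vertices `k,…,k+l-1`. -/
def Fgraph (k l : ℕ) : SimpleGraph (Fin (k + l)) where
  Adj i j := i ≠ j ∧ (i.val = 0 ∨ j.val = 0 ∨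
    (i.val < k ∧ j.val < k ∧ (i.val = 1 ∨ j.val = 1)))
  symm := by
    constructor
    rintro i j ⟨h1, h2⟩
    refine ⟨h1.symm, ?_⟩
    rcases h2 with h | h | ⟨ha, hb, hc⟩
    · exact Or.inr (Or.inl h)
    · exact Or.inl h
    · exact Or.inr (Or.inr ⟨hb, ha, hc.symm⟩)
  loopless := by constructor; rintro i ⟨h1, _⟩; exact h1 rfl

/-- The star `K_{1,t}` with center `0`. -/
def starG (t : ℕ) : SimpleGraph (Fin (t + 1)) where
  Adj i j := i ≠ j ∧ (i.val = 0 ∨ j.val = 0)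
  symm := by constructor; rintro i j ⟨h1, h2⟩; exact ⟨h1.symm, h2.symm⟩
  loopless := by constructor; rintro i ⟨h1, _⟩; exact h1 rfl

/-- `e(S)`: the number of edges of `G` with both endpoints in `S`. -/
noncomputable def eIn {V : Type*} (G : SimpleGraph V) (S : Set V) : ℕ :=
  {e ∈ G.edgeSet | ∀ v ∈ e, v ∈ S}.ncard

/-- `e(S,T)`: the number of edges of `G` with one endpoint in `S` and the other in `T`. -/
noncomputable def eBetween {V : Type*} (G : SimpleGraph V) (S T : Set V) : ℕ :=
  {e ∈ G.edgeSet | ∃ a ∈ S, ∃ b ∈ T, e = s(a, b)}.ncard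

/-- `G` attains the maximum spectral radius among all `H(4,3)`-free graphs with `m`
edges and no isolated vertices. -/
def IsExtremal (m : ℕ) {V : Type*} [Fintype V] (G : SimpleGraph V) : Prop :=
  H43Free G ∧ G.edgeSet.ncard = m ∧ (∀ v : V, ∃ w, G.Adj v w) ∧
    ∀ (n : ℕ) (G' : SimpleGraph (Fin n)), H43Free G' → G'.edgeSet.ncard = m →
      (∀ v, ∃ w, G'.Adj v w) → specRad G' ≤ specRad G

/-!
Write `ρ = ρ(G)`, `N = N(u*)` and `d(c) = |N(c) ∩ N|`. Applying the eigenvalue equation twice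
at the maximal entry gives `(ρ² - ρ) x_{u*} = ∑_c d(c) x_c - ∑_{c ∈ N} x_c`. Since `d` vanishes
on `N ∖ A₊` and is at least `1` on `A₊`, bounding every `x_c` by `x_{u*}` yields
`ρ² - ρ ≤ |N| + 2 e(N) - |A₊| + e(N, W) = m - e(W) + e(A₊) - |A₊|`.
On the other hand `S⁻_{m/2+2,2}` has `m` edges, all covered by two vertices, so it is
`H(4,3)`-free, and a test vector shows `ρ(S⁻)² - ρ(S⁻) > m - 2`; by extremality `ρ² - ρ > m - 2`.
Hence `e(W) < e(A₊) - |A₊| + 2`, and the claim follows by integrality.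
-/

theorem Matrix.IsHermitian.dotProduct_mulVec_le_sSup_mul {ι : Type*} [Fintype ι] [DecidableEq ι]
    {A : Matrix ι ι ℝ} (hA : A.IsHermitian) {y : ι → ℝ} (hy : y ≠ 0) :
    y ⬝ᵥ (A *ᵥ y) ≤ sSup {t : ℝ | ∃ x : ι → ℝ, x ≠ 0 ∧ A *ᵥ x = t • x} * (y ⬝ᵥ y) := by
  set T := A.toEuclideanLin
  have hquot (x : ι → ℝ) : x ⬝ᵥ (A *ᵥ x) / (x ⬝ᵥ x)
      = RCLike.re (inner ℝ (T (WithLp.toLp 2 x)) (WithLp.toLp 2 x)) / ‖WithLp.toLp 2 x‖ ^ 2 := by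
    rw [EuclideanSpace.real_norm_sq_eq]
    simp [T, toLpLin_toLp, EuclideanSpace.inner_toLp_toLp, dotProduct, sq]
  have hpos {x : ι → ℝ} (hx : x ≠ 0) : 0 < x ⬝ᵥ x := by
    simpa using dotProduct_star_self_pos_iff.2 hx
  have : Nontrivial (EuclideanSpace ℝ ι) :=
    nontrivial_of_ne (WithLp.toLp 2 y) 0 (by simpa using hy)
  set μ := ⨆ x : {x : EuclideanSpace ℝ ι // x ≠ 0},
    RCLike.re (inner ℝ (T x) (x : EuclideanSpace ℝ ι)) / ‖(x : EuclideanSpace ℝ ι)‖ ^ 2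
  have hbdd : BddAbove (Set.range fun x : {x : EuclideanSpace ℝ ι // x ≠ 0} =>
      RCLike.re (inner ℝ (T x) (x : EuclideanSpace ℝ ι)) / ‖(x : EuclideanSpace ℝ ι)‖ ^ 2) :=
    ⟨‖LinearMap.toContinuousLinearMap T‖, by
      rintro _ ⟨x, rfl⟩
      exact (le_abs_self _).trans ((LinearMap.toContinuousLinearMap T).rayleighQuotient_le_norm x)⟩
  have hle {x : ι → ℝ} (hx : x ≠ 0) : x ⬝ᵥ (A *ᵥ x) ≤ μ * (x ⬝ᵥ x) := by
    rw [← div_le_iff₀ (hpos hx), hquot]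
    exact le_ciSup hbdd ⟨WithLp.toLp 2 x, by simpa using hx⟩
  have hμ : sSup {t : ℝ | ∃ x : ι → ℝ, x ≠ 0 ∧ A *ᵥ x = t • x} = μ := by
    refine IsGreatest.csSup_eq ⟨?_, ?_⟩
    · obtain ⟨v, hv⟩ := (isSymmetric_toEuclideanLin_iff.2 hA
        |>.hasEigenvalue_iSup_of_finiteDimensional).exists_hasEigenvector
      exact ⟨WithLp.ofLp v, by simpa using hv.2, congrArg WithLp.ofLp hv.apply_eq_smul⟩
    · rintro t ⟨x, hx, hAx⟩
      have := hle hx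
      rwa [hAx, dotProduct_smul, smul_eq_mul, mul_le_mul_iff_left₀ (hpos hx)] at this
  exact hμ ▸ hle hy

theorem sum_indicator_one_eq_ncard {V : Type*} [Fintype V] (S : Set V) :
    ∑ v, S.indicator (1 : V → ℝ) v = S.ncard := by
  classical
  simp [Set.indicator_apply, Finset.sum_boole, Set.ncard_eq_toFinset_card']

namespace SimpleGraph

variable {V : Type*} (G : SimpleGraph V)

theorem adjMat_eq_adjMatrix [DecidableRel G.Adj] : adjMat G = G.adjMatrix ℝ := by
  ext i j
  simp only [adjMat, adjMatrix_apply]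
  congr

theorem eIn_univ : eIn G Set.univ = G.edgeSet.ncard := by
  simp [eIn]

theorem eIn_sep_exists_adj (S : Set V) : eIn G {v ∈ S | ∃ w ∈ S, G.Adj v w} = eIn G S := by
  unfold eIn
  congr 1
  ext e
  induction e using Sym2.ind with
  | _ a b =>
    simp only [Set.mem_ofPred_eq, mem_edgeSet, Sym2.mem_iff, forall_eq_or_imp, forall_eq]
    exact ⟨fun ⟨h, ha, hb⟩ => ⟨h, ha.1, hb.1⟩,
      fun ⟨h, ha, hb⟩ => ⟨h, ⟨ha, b, hb, h⟩, ⟨hb, a, ha, h.symm⟩⟩⟩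

variable [Fintype V] [DecidableRel G.Adj]

theorem dotProduct_adjMatrix_mulVec_le_specRad_mul [DecidableEq V] {y : V → ℝ} (hy : y ≠ 0) :
    y ⬝ᵥ (G.adjMatrix ℝ *ᵥ y) ≤ specRad G * (y ⬝ᵥ y) := by
  have hA : (G.adjMatrix ℝ).IsHermitian := isHermitian_iff_isSymm.2 G.isSymm_adjMatrix
  simpa [specRad, adjMat_eq_adjMatrix] using hA.dotProduct_mulVec_le_sSup_mul hy

theorem dotProduct_adjMatrix_mulVec_comm (y z : V → ℝ) :
    y ⬝ᵥ (G.adjMatrix ℝ *ᵥ z) = z ⬝ᵥ (G.adjMatrix ℝ *ᵥ y) := by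
  rw [dotProduct_mulVec, ← mulVec_transpose, transpose_adjMatrix, dotProduct_comm]

theorem adjMatrix_mulVec_apply_eq_dotProduct (u : V) (z : V → ℝ) :
    (G.adjMatrix ℝ *ᵥ z) u = (G.neighborSet u).indicator 1 ⬝ᵥ z := by
  simp [dotProduct, Set.indicator_apply, neighborFinset_eq_filter, Finset.sum_filter]

theorem indicator_dotProduct_adjMatrix_mulVec_indicator (S : Set V) :
    S.indicator 1 ⬝ᵥ (G.adjMatrix ℝ *ᵥ S.indicator 1) = 2 * eIn G S := by
  classical
  set H := (G.induce S).spanningCoe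
  have hH (a b : V) : H.Adj a b ↔ G.Adj a b ∧ a ∈ S ∧ b ∈ S := by
    simp [H]
  have hE : H.edgeSet = {e ∈ G.edgeSet | ∀ v ∈ e, v ∈ S} := by
    ext e
    induction e using Sym2.ind with
    | _ a b => simp [hH]
  have := H.natCast_card_dart_eq_dotProduct (α := ℝ)
  rw [dart_card_eq_twice_card_edges, edgeFinset_card, Set.fintypeCard_eq_ncard, hE] at this
  rw [eIn]
  push_cast at this ⊢
  rw [this, dotProduct_comm (_ *ᵥ _), dotProduct_mulVec_adjMatrix, dotProduct_mulVec_adjMatrix]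
  refine Finset.sum_congr rfl fun a _ => Finset.sum_congr rfl fun b _ => ?_
  by_cases ha : a ∈ S <;> by_cases hb : b ∈ S <;> simp [hH, ha, hb]

variable (u : V)

theorem sq_sub_self_mul_le {x : V → ℝ} {ρ : ℝ} (hx : ∀ v, 0 ≤ x v)
    (heig : G.adjMatrix ℝ *ᵥ x = ρ • x) (hmax : ∀ v, x v ≤ x u) :
    (ρ ^ 2 - ρ) * x u ≤ ((1 : V → ℝ) ⬝ᵥ (G.adjMatrix ℝ *ᵥ (G.neighborSet u).indicator 1)
      - {v ∈ G.neighborSet u | ∃ w ∈ G.neighborSet u, G.Adj v w}.ncard) * x u := by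
  set N := G.neighborSet u
  set Ap := {v ∈ N | ∃ w ∈ N, G.Adj v w}
  set n := N.indicator (1 : V → ℝ)
  set d := G.adjMatrix ℝ *ᵥ n
  have hρ : n ⬝ᵥ x = ρ * x u := by
    rw [← adjMatrix_mulVec_apply_eq_dotProduct, heig, Pi.smul_apply, smul_eq_mul]
  have hρ2 : d ⬝ᵥ x = ρ ^ 2 * x u := by
    rw [dotProduct_comm, dotProduct_adjMatrix_mulVec_comm, heig, dotProduct_smul, hρ, smul_eq_mul]
    ring
  have hvertex (c : V) : (d c - n c) * x c ≤ (d c - Ap.indicator 1 c) * x u := by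
    have hd : d c = ∑ w ∈ G.neighborFinset c, n w := adjMatrix_mulVec_apply _ _ _
    have hd0 : 0 ≤ d c := hd ▸ Finset.sum_nonneg fun w _ => Set.indicator_nonneg (by simp) w
    by_cases hcAp : c ∈ Ap
    · obtain ⟨hcN, w, hwN, hcw⟩ := id hcAp
      have hd1 : 1 ≤ d c := by
        rw [hd]
        refine le_of_eq_of_le ?_ (Finset.single_le_sum (fun w _ => Set.indicator_nonneg
          (by simp) w) ((mem_neighborFinset _ _ _).2 hcw))
        simp [hwN]
      simp only [n, Set.indicator_of_mem hcN, Set.indicator_of_mem hcAp, Pi.one_apply]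
      exact mul_le_mul_of_nonneg_left (hmax c) (by linarith)
    · rw [Set.indicator_of_notMem hcAp]
      by_cases hcN : c ∈ N
      · have hdc : d c = 0 := by
          rw [hd]
          refine Finset.sum_eq_zero fun w hw => Set.indicator_of_notMem (fun hwN => hcAp ?_) _
          exact ⟨hcN, w, hwN, (mem_neighborFinset _ _ _).1 hw⟩
        simp only [hdc, n, Set.indicator_of_mem hcN, Pi.one_apply]
        linarith [hx c]
      · simp only [n, Set.indicator_of_notMem hcN, sub_zero]
        exact mul_le_mul_of_nonneg_left (hmax c) hd0
  calc (ρ ^ 2 - ρ) * x u = ∑ c, (d c - n c) * x c := by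
        rw [sub_mul, ← hρ, ← hρ2, ← sub_dotProduct]
        rfl
    _ ≤ ∑ c, (d c - Ap.indicator 1 c) * x u := Finset.sum_le_sum fun c _ => hvertex c
    _ = ((1 : V → ℝ) ⬝ᵥ d - Ap.ncard) * x u := by
        rw [← Finset.sum_mul, Finset.sum_sub_distrib, sum_indicator_one_eq_ncard, one_dotProduct]

theorem one_dotProduct_adjMatrix_mulVec_indicator_neighborSet [DecidableEq V] :
    (1 : V → ℝ) ⬝ᵥ (G.adjMatrix ℝ *ᵥ (G.neighborSet u).indicator 1)
      = G.edgeSet.ncard - eIn G (insert u (G.neighborSet u))ᶜ + eIn G (G.neighborSet u) := by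
  set A := G.adjMatrix ℝ
  set e : V → ℝ := Pi.single u 1
  set n := (G.neighborSet u).indicator (1 : V → ℝ)
  have hrow (z : V → ℝ) : e ⬝ᵥ (A *ᵥ z) = n ⬝ᵥ z := by
    rw [single_one_dotProduct, adjMatrix_mulVec_apply_eq_dotProduct]
  have hn1 : n ⬝ᵥ 1 = (G.neighborSet u).ncard := by
    rw [dotProduct_one, sum_indicator_one_eq_ncard]
  have hnn : n ⬝ᵥ n = (G.neighborSet u).ncard := by
    rw [← hn1]
    refine Finset.sum_congr rfl fun v _ => ?_
    by_cases hv : v ∈ G.neighborSet u <;> simp [n, hv]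
  have hne : n ⬝ᵥ e = 0 := by simp [n, e]
  have h11 := G.indicator_dotProduct_adjMatrix_mulVec_indicator Set.univ
  have hNN := G.indicator_dotProduct_adjMatrix_mulVec_indicator (G.neighborSet u)
  have hWW := G.indicator_dotProduct_adjMatrix_mulVec_indicator (insert u (G.neighborSet u))ᶜ
  have hW : (insert u (G.neighborSet u))ᶜ.indicator 1 = 1 - e - n := by
    ext v
    by_cases hv : v = u
    · simp [hv, e, n]
    · by_cases hvN : v ∈ G.neighborSet u <;> simp [hv, hvN, e, n]
  rw [Set.indicator_univ, eIn_univ] at h11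
  -- expand `𝟙_W ⬝ᵥ A *ᵥ 𝟙_W` bilinearly and use the symmetry of `A`
  rw [hW] at hWW
  simp only [mulVec_sub, dotProduct_sub, sub_dotProduct] at hWW
  linarith [hrow 1, hrow e, hrow n, G.dotProduct_adjMatrix_mulVec_comm 1 e,
    G.dotProduct_adjMatrix_mulVec_comm n e, G.dotProduct_adjMatrix_mulVec_comm n 1]

end SimpleGraph

theorem exists_h43_adj_ne (a b : Fin 6) :
    ∃ i j, H43.Adj i j ∧ i ≠ a ∧ i ≠ b ∧ j ≠ a ∧ j ≠ b := by
  have h12 : H43.Adj 1 2 := by simp [H43]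
  have h30 : H43.Adj 3 0 := by simp [H43]
  have h45 : H43.Adj 4 5 := by simp [H43]
  -- the edges `12`, `30`, `45` form a matching, so no two vertices meet all three
  have : (1 ≠ a ∧ 1 ≠ b ∧ 2 ≠ a ∧ 2 ≠ b) ∨ (3 ≠ a ∧ 3 ≠ b ∧ 0 ≠ a ∧ 0 ≠ b) ∨
      (4 ≠ a ∧ 4 ≠ b ∧ 5 ≠ a ∧ 5 ≠ b) := by
    revert a b; decide
  rcases this with h | h | h
  exacts [⟨1, 2, h12, h⟩, ⟨3, 0, h30, h⟩, ⟨4, 5, h45, h⟩]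

theorem h43Free_of_forall_adj {β : Type*} {G : SimpleGraph β} (c₀ c₁ : β)
    (hcover : ∀ v w, G.Adj v w → v = c₀ ∨ v = c₁ ∨ w = c₀ ∨ w = c₁) : H43Free G := by
  rintro ⟨f, hf, hadj⟩
  have hpre (c : β) : ∃ a, ∀ i, f i = c → i = a := by
    by_cases h : ∃ a, f a = c
    · obtain ⟨a, rfl⟩ := h
      exact ⟨a, fun i hi => hf hi⟩
    · exact ⟨0, fun i hi => absurd ⟨i, hi⟩ h⟩
  obtain ⟨a, ha⟩ := hpre c₀
  obtain ⟨b, hb⟩ := hpre c₁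
  obtain ⟨i, j, hij, hia, hib, hja, hjb⟩ := exists_h43_adj_ne a b
  rcases hcover _ _ (hadj hij) with h | h | h | h
  exacts [hia (ha i h), hib (hb i h), hja (ha j h), hjb (hb j h)]

instance (n : ℕ) : DecidableRel (SgraphMinus n).Adj := fun i j => by
  unfold SgraphMinus
  infer_instance

theorem sgraphMinus_h43Free (k : ℕ) : H43Free (SgraphMinus (k + 3)) :=
  h43Free_of_forall_adj ⟨0, by omega⟩ ⟨1, by omega⟩ fun v w ⟨_, h, _⟩ => by
    simp only [Fin.ext_iff]
    omega

theorem sgraphMinus_exists_adj (k : ℕ) (v : Fin (k + 3)) : ∃ w, (SgraphMinus (k + 3)).Adj v w := by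
  by_cases hv : v.val = 0
  · exact ⟨⟨1, by omega⟩, by simp only [SgraphMinus, ne_eq, Fin.ext_iff]; omega⟩
  · exact ⟨⟨0, by omega⟩, by simp only [SgraphMinus, ne_eq, Fin.ext_iff]; omega⟩

theorem dotProduct_adjMatrix_sgraphMinus_mulVec (k : ℕ) (a b c d : ℝ) :
    let y : Fin (k + 3) → ℝ := Fin.cons a (Fin.cons b (Fin.cons c fun _ => d))
    y ⬝ᵥ ((SgraphMinus (k + 3)).adjMatrix ℝ *ᵥ y) = 2 * (a * b + a * c + k * d * (a + b)) := by
  intro y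
  rw [dotProduct_mulVec_adjMatrix]
  simp only [y, Fin.sum_univ_succ, Fin.cons_zero, Fin.cons_succ]
  have h2 : 2 % (k + 3) = 2 := Nat.mod_eq_of_lt (by omega)
  simp [SgraphMinus, Fin.ext_iff, h2]
  ring

theorem ncard_edgeSet_sgraphMinus (k : ℕ) : (SgraphMinus (k + 3)).edgeSet.ncard = 2 * k + 2 := by
  have h := (SgraphMinus (k + 3)).indicator_dotProduct_adjMatrix_mulVec_indicator Set.univ
  have h1 : (Fin.cons 1 (Fin.cons 1 (Fin.cons 1 fun _ => 1)) : Fin (k + 3) → ℝ) = 1 := by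
    ext i
    rcases i with ⟨_ | _ | _ | i, hi⟩ <;> rfl
  rw [Set.indicator_univ, eIn_univ, ← h1, dotProduct_adjMatrix_sgraphMinus_mulVec] at h
  exact_mod_cast (by linarith : ((SgraphMinus (k + 3)).edgeSet.ncard : ℝ) = 2 * k + 2)

theorem sgraphMinus_specRad (k : ℕ) :
    1 < specRad (SgraphMinus (k + 3)) ∧
      2 * k < specRad (SgraphMinus (k + 3)) ^ 2 - specRad (SgraphMinus (k + 3)) := by
  set σ := specRad (SgraphMinus (k + 3))
  -- `r² - r = 2k`, and the test vector `y = (r/2, r/2, 1/2, 1, …, 1)` has Rayleigh quotient `> r`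
  set r := (1 + √(8 * k + 1)) / 2
  have hsqrt : √(8 * k + 1) ^ 2 = 8 * k + 1 := Real.sq_sqrt (by positivity)
  have hr : r ^ 2 = r + 2 * k := by simp only [r]; linear_combination hsqrt / 4
  have hr1 : 1 ≤ r := by
    have : 1 ≤ √(8 * k + 1) := Real.one_le_sqrt.2 (le_add_of_nonneg_left (by positivity))
    simp only [r]; linarith
  set y : Fin (k + 3) → ℝ := Fin.cons (r / 2) (Fin.cons (r / 2) (Fin.cons (1 / 2) fun _ => 1))
  have hy : y ≠ 0 := fun h => by
    have := congrFun h 0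
    simp [y] at this
    linarith
  have hyy : y ⬝ᵥ y = r ^ 2 / 2 + 1 / 4 + k := by
    simp [y, dotProduct, Fin.sum_univ_succ]
    ring
  have hyAy := (SgraphMinus (k + 3)).dotProduct_adjMatrix_mulVec_le_specRad_mul hy
  rw [dotProduct_adjMatrix_sgraphMinus_mulVec, hyy] at hyAy
  have hrσ : r < σ := by nlinarith
  constructor <;> nlinarith

/-- For an extremal graph `G` (even `m ≥ 38`) with Perron vector `x`
maximized at `u`, we have `e(W) ≤ e(A₊) − |A₊| + 1`. -/
theorem stmt16 {V : Type*} [Fintype V] (m : ℕ) (hm : 38 ≤ m) (hme : Even m)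
    (G : SimpleGraph V) (hext : IsExtremal m G)
    (x : V → ℝ) (hxpos : ∀ v, 0 < x v)
    (heig : (adjMat G).mulVec x = specRad G • x)
    (u : V) (hmaxx : ∀ v, x v ≤ x u)
    (N W Ap : Set V)
    (hN : N = G.neighborSet u)
    (hW : W = (insert u N)ᶜ)
    (hAp : Ap = {v ∈ N | ∃ w ∈ N, G.Adj v w}) :
    (eIn G W : ℝ) ≤ (eIn G Ap : ℝ) - (Ap.ncard : ℝ) + 1 := by
  classical
  obtain ⟨-, hcard, -, hmax⟩ := hext
  obtain ⟨k, rfl⟩ : ∃ k, m = 2 * k + 2 := by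
    obtain ⟨j, rfl⟩ := hme
    exact ⟨j - 1, by omega⟩
  have hcompare : specRad (SgraphMinus (k + 3)) ≤ specRad G :=
    hmax _ _ (sgraphMinus_h43Free k) (ncard_edgeSet_sgraphMinus k) (sgraphMinus_exists_adj k)
  have hlower : (2 * k : ℝ) < specRad G ^ 2 - specRad G := by
    nlinarith [sgraphMinus_specRad k]
  rw [adjMat_eq_adjMatrix] at heig
  have hupper := le_of_mul_le_mul_right
    (G.sq_sub_self_mul_le u (fun v => (hxpos v).le) heig hmaxx) (hxpos u)
  rw [one_dotProduct_adjMatrix_mulVec_indicator_neighborSet, hcard,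
    ← G.eIn_sep_exists_adj (G.neighborSet u), ← hN, ← hW, ← hAp] at hupper
  push_cast at hupper
  have hlt : eIn G W + Ap.ncard < eIn G Ap + 2 := by
    exact_mod_cast (by linarith : (eIn G W : ℝ) + Ap.ncard < eIn G Ap + 2)
  have hle : (eIn G W : ℝ) + Ap.ncard ≤ eIn G Ap + 1 := by
    exact_mod_cast Nat.le_of_lt_succ hlt
  linarith
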